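/- For N = 2^n, n ≥ 2, define T(i,p,N) = S(i,N) + e(i-1,p) for 1 ≤ p ≤ n and 0 < i < N, where e(j,p) is the number of 1's minus the number of 0's among binary bit positions p+1,...,n of j. Then max over all valid i and p of T(i,p,N) equals m(N) + 1, where m(N) = ⌊2N/3⌋. -/
import Mathlib


/-- Number of dimension-`k` links crossing intercolumn position `i`
(least nonnegative residue mod `2^k`). -/
def f (i : ℤ) (k : ℕ) : ℤ := (i * (1 - 2 * (((i - 1) / 2 ^ (k - 1)) % 2))) % 2 ^ k

/-- Total wire density at intercolumn position `i` for `N = 2^n`. -/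
def S (i : ℤ) (n : ℕ) : ℤ := ∑ k ∈ Finset.Icc 1 n, f i k

/-- The `j`-th binary digit of `i`, counting from 1 at the right. -/
def b (i : ℤ) (j : ℕ) : ℤ := (i / 2 ^ (j - 1)) % 2

/-- Excess of 1's over 0's among bit positions `j+1, ..., n` of `i`. -/
def e (i : ℤ) (j n : ℕ) : ℤ := ∑ l ∈ Finset.Icc (j + 1) n, (2 * b i l - 1)

/-- Maximum wire density `m(N)` for `N = 2^n`. -/
def m (n : ℕ) : ℤ := (4 * 2 ^ n - (-1) ^ n - 3) / 6

/-- Leftmost maximizing position `p(N)` for `N = 2^n`. -/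
def p (n : ℕ) : ℤ := (2 ^ n - (-1) ^ n) / 3


lemma key (j P : ℤ) (hP : 0 < P) : j / P % 2 = if j % (2 * P) < P then 0 else 1 := by
  have hd : (P:ℤ) ∣ 2 * P := ⟨2, by ring⟩
  set s := j % (2 * P) with hs
  have hs0 : 0 ≤ s := Int.emod_nonneg j (by positivity)
  have hs2 : s < 2 * P := Int.emod_lt_of_pos j (by positivity)
  have hj : j = s + (2 * (j / (2 * P))) * P := by
    have := Int.mul_ediv_add_emod j (2 * P); push_cast at this ⊢; linarith [this]
  have hdiv : j / P = s / P + 2 * (j / (2 * P)) := by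
    conv_lhs => rw [hj]
    rw [Int.add_mul_ediv_right _ _ hP.ne']
  rw [hdiv, Int.add_mul_emod_self_left]
  split_ifs with h
  · rw [Int.ediv_eq_zero_of_lt hs0 h]; norm_num
  · push_neg at h
    have h1 : s / P = 1 := by
      have e1 : s = (s - P) + 1 * P := by ring
      rw [e1, Int.add_mul_ediv_right _ _ hP.ne',
        Int.ediv_eq_zero_of_lt (by linarith) (by linarith)]
      norm_num
    rw [h1]; norm_num

lemma b_eq (j : ℤ) (k : ℕ) (hk : 1 ≤ k) :
    b j k = if j % 2 ^ k < 2 ^ (k - 1) then 0 else 1 := by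
  obtain ⟨k, rfl⟩ : ∃ k', k = k' + 1 := ⟨k - 1, by omega⟩
  have h2 : (2:ℤ) ^ (k + 1) = 2 * 2 ^ k := by ring
  have := key j (2 ^ k) (by positivity)
  simpa [b, h2] using this

lemma f_eq (i : ℤ) (k : ℕ) (hk : 1 ≤ k) :
    f i k = if (i - 1) % 2 ^ k < 2 ^ (k - 1) then (i - 1) % 2 ^ k + 1
            else 2 ^ k - 1 - (i - 1) % 2 ^ k := by
  obtain ⟨k, rfl⟩ : ∃ k', k = k' + 1 := ⟨k - 1, by omega⟩
  have h2 : (2:ℤ) ^ (k + 1) = 2 * 2 ^ k := by ring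
  set M : ℤ := 2 ^ (k + 1) with hM
  have hM0 : (0:ℤ) < M := by positivity
  set j : ℤ := i - 1 with hjdef
  set s := j % M with hs
  have hs0 : 0 ≤ s := Int.emod_nonneg j hM0.ne'
  have hs2 : s < M := Int.emod_lt_of_pos j hM0
  have hmod : j ≡ s [ZMOD M] := (Int.emod_emod_of_dvd j dvd_rfl).symm
  have hbit : j / 2 ^ k % 2 = if s < 2 ^ k then 0 else 1 := by
    have := key j (2 ^ k) (by positivity); rw [← h2] at this; exact this
  unfold f
  simp only [Nat.add_sub_cancel, ← hjdef, ← hM, hbit]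
  split_ifs with h
  · have : i * (1 - 2 * 0) = j + 1 := by rw [hjdef]; ring
    rw [this]
    have hcong : (j + 1) % M = (s + 1) % M := Int.ModEq.add_right 1 hmod
    rw [hcong, Int.emod_eq_of_lt (by linarith) (by rw [h2]; nlinarith [hs0])]
  · push_neg at h
    have : i * (1 - 2 * 1) = -(j + 1) := by rw [hjdef]; ring
    rw [this]
    have hcong : (-(j + 1)) % M = (M - 1 - s) % M := by
      have : -(j+1) ≡ -(s+1) [ZMOD M] := (hmod.add_right 1).neg
      calc (-(j+1)) % M = (-(s+1)) % M := this
        _ = (-(s+1) + M) % M := (Int.add_mul_emod_self_left (-(s+1)) M 1).symm ▸ by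
              rw [show -(s+1) + M = -(s+1) + M * 1 by ring, Int.add_mul_emod_self_left]
        _ = (M - 1 - s) % M := by ring_nf
    rw [hcong, Int.emod_eq_of_lt (by linarith) (by linarith)]

/-- augmented summand -/
def G (i : ℤ) (q k : ℕ) : ℤ := f i k + (if k ≤ q then 0 else 2 * b (i - 1) k - 1)

lemma emod_sub_emod (j : ℤ) (k : ℕ) :
    (j % 2 ^ (k+1)) % 2 ^ k = j % 2 ^ k :=
  Int.emod_emod_of_dvd j (pow_dvd_pow 2 (Nat.le_succ k))

lemma single_bound (i : ℤ) (q k : ℕ) (hk : 1 ≤ k) : G i q k ≤ 2 ^ (k - 1) := by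
  obtain ⟨k, rfl⟩ : ∃ k', k = k' + 1 := ⟨k - 1, by omega⟩
  have hP : (0:ℤ) < 2 ^ k := by positivity
  have h2 : (2:ℤ) ^ (k + 1) = 2 * 2 ^ k := by ring
  have hs0 : 0 ≤ (i-1) % 2 ^ (k+1) := Int.emod_nonneg _ (by positivity)
  have hs2 : (i-1) % 2 ^ (k+1) < 2 ^ (k+1) := Int.emod_lt_of_pos _ (by positivity)
  unfold G
  rw [f_eq i (k+1) (by omega), b_eq (i-1) (k+1) (by omega)]
  simp only [Nat.add_sub_cancel] at *
  split_ifs <;> omega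

lemma pair_bound (i : ℤ) (q k : ℕ) (hk : 1 ≤ k) :
    G i q k + G i q (k + 1) ≤ 2 ^ k + (if q = k then 1 else 0) := by
  obtain ⟨k, rfl⟩ : ∃ k', k = k' + 1 := ⟨k - 1, by omega⟩
  have hP : (0:ℤ) < 2 ^ k := by positivity
  set r := (i-1) % 2 ^ (k+2) with hr
  set s := (i-1) % 2 ^ (k+1) with hs
  have hsr : r % 2 ^ (k+1) = s := emod_sub_emod (i-1) (k+1)
  have hr0 : 0 ≤ r := Int.emod_nonneg _ (by positivity)
  have hr2 : r < 2 ^ (k+2) := Int.emod_lt_of_pos _ (by positivity)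
  have h2 : (2:ℤ) ^ (k + 1) = 2 * 2 ^ k := by ring
  have h4 : (2:ℤ) ^ (k + 2) = 2 * 2 ^ (k+1) := by ring
  have hcase : (s = r ∧ r < 2 ^ (k+1)) ∨ (s = r - 2 ^ (k+1) ∧ 2 ^ (k+1) ≤ r) := by
    rcases lt_or_ge r (2 ^ (k+1)) with h | h
    · exact Or.inl ⟨by rw [← hsr, Int.emod_eq_of_lt hr0 h], h⟩
    · refine Or.inr ⟨?_, h⟩
      rw [← hsr]
      have h5 : r = (r - 2 ^ (k+1)) + 2 ^ (k+1) * 1 := by ring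
      conv_lhs => rw [h5]
      rw [Int.add_mul_emod_self_left,
        Int.emod_eq_of_lt (by linarith) (by linarith)]
  unfold G
  rw [f_eq i (k+1) (by omega), f_eq i (k+2) (by omega),
    b_eq (i-1) (k+1) (by omega), b_eq (i-1) (k+2) (by omega)]
  simp only [Nat.add_sub_cancel, ← hr, ← hs]
  have e1 : (2:ℤ) ^ (k + 2 - 1) = 2 ^ (k+1) := by norm_num
  rw [e1]
  split_ifs <;> omega


lemma six_dvd (n : ℕ) : (6:ℤ) ∣ 4 * 2 ^ n - (-1) ^ n - 3 := by
  induction n with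
  | zero => decide
  | succ n ih =>
    obtain ⟨c, hc⟩ := ih
    rcases Nat.even_or_odd n with h | h
    · rw [pow_succ, pow_succ, h.neg_one_pow] at *
      exact ⟨2 * c + 1, by linarith⟩
    · rw [pow_succ, pow_succ, h.neg_one_pow] at *
      exact ⟨2 * c, by linarith⟩

lemma three_dvd (n : ℕ) : (3:ℤ) ∣ 2 ^ n - (-1) ^ n := by
  induction n with
  | zero => decide
  | succ n ih =>
    obtain ⟨c, hc⟩ := ih
    rcases Nat.even_or_odd n with h | h
    · rw [pow_succ, pow_succ, h.neg_one_pow] at *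
      exact ⟨2 * c + 1, by linarith⟩
    · rw [pow_succ, pow_succ, h.neg_one_pow] at *
      exact ⟨2 * c - 1, by linarith⟩

lemma m_mul (n : ℕ) : 6 * m n = 4 * 2 ^ n - (-1) ^ n - 3 := by
  unfold m; exact Int.mul_ediv_cancel' (six_dvd n)

lemma p_mul (n : ℕ) : 3 * p n = 2 ^ n - (-1) ^ n := by
  unfold p; exact Int.mul_ediv_cancel' (three_dvd n)

lemma neg_one_sq_pow (n : ℕ) : ((-1:ℤ)) ^ (n + 2) = (-1) ^ n := by
  rw [pow_succ, pow_succ]; ring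

lemma m_step (n : ℕ) : m (n + 2) = m n + 2 ^ (n + 1) := by
  have h1 := m_mul n
  have h2 := m_mul (n + 2)
  rw [neg_one_sq_pow] at h2
  have e1 : (2:ℤ) ^ (n + 2) = 4 * 2 ^ n := by ring
  have e2 : (2:ℤ) ^ (n + 1) = 2 * 2 ^ n := by ring
  rw [e1] at h2; rw [e2]; omega

lemma p_step (n : ℕ) : p (n + 2) = p n + 2 ^ n := by
  have h1 := p_mul n
  have h2 := p_mul (n + 2)
  rw [neg_one_sq_pow] at h2
  have e1 : (2:ℤ) ^ (n + 2) = 4 * 2 ^ n := by ring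
  omega

def W (i : ℤ) (q n : ℕ) : ℤ := ∑ k ∈ Finset.Icc 1 n, G i q k

lemma sum_eq (i : ℤ) (q n : ℕ) : S i n + e (i - 1) q n = W i q n := by
  unfold S e W G
  symm
  rw [Finset.sum_add_distrib]
  congr 1
  rw [Finset.sum_ite]
  simp only [Finset.sum_const_zero, zero_add]
  apply Finset.sum_congr _ (fun _ _ => rfl)
  ext a
  simp only [Finset.mem_filter, Finset.mem_Icc]
  omega

lemma W_step (i : ℤ) (q n : ℕ) :
    W i q (n + 2) = W i q n + (G i q (n + 1) + G i q (n + 2)) := by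
  unfold W
  rw [Finset.sum_Icc_succ_top (by omega : 1 ≤ n + 2),
    Finset.sum_Icc_succ_top (by omega : 1 ≤ n + 1)]
  ring

lemma ub (n : ℕ) : ∀ (i : ℤ) (q : ℕ),
    W i q n ≤ m n + 1 ∧ ((q = 0 ∨ n ≤ q) → W i q n ≤ m n) := by
  induction n using Nat.strong_induction_on with
  | _ n ih =>
    match n with
    | 0 =>
      intro i q
      have hW : W i q 0 = 0 := by simp [W]
      have hm : m 0 = 0 := by decide
      constructor <;> [skip; intro] <;> omega
    | 1 =>
      intro i q
      have hW : W i q 1 = G i q 1 := by simp [W]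
      have hG := single_bound i q 1 le_rfl
      have hm : m 1 = 1 := by decide
      norm_num at hG
      constructor <;> [skip; intro] <;> omega
    | (n + 2) =>
      intro i q
      have IH1 := (ih n (by omega) i q).1
      have IH2 := (ih n (by omega) i q).2
      have hpair : G i q (n+1) + G i q (n+2) ≤ 2 ^ (n+1) + (if q = n+1 then 1 else 0) := by
        simpa using pair_bound i q (n+1) (by omega)
      have hstep := W_step i q n
      have hm := m_step n
      rw [hstep, hm]
      by_cases hq : q = n + 1
      · rw [if_pos hq] at hpair
        have hA := IH2 (Or.inr (by omega))
        constructor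
        · linarith
        · rintro (h | h) <;> omega
      · rw [if_neg hq] at hpair
        constructor
        · by_cases h0 : q = 0
          · have hA := IH2 (Or.inl h0); linarith
          by_cases hn2 : n + 2 ≤ q
          · have hA := IH2 (Or.inr (by omega)); linarith
          · linarith
        · rintro (h | h)
          · have hA := IH2 (Or.inl h); linarith
          · have hA := IH2 (Or.inr (by omega)); linarith

lemma f_period (i : ℤ) (k n : ℕ) (hk : 1 ≤ k) (hkn : k ≤ n) :
    f (i + 2 ^ n) k = f i k := by
  rw [f_eq _ k hk, f_eq i k hk]
  have h : (i + 2 ^ n - 1) % 2 ^ k = (i - 1) % 2 ^ k := by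
    have h2 : (i + 2 ^ n - 1) = (i - 1) + 2 ^ (n - k) * 2 ^ k := by
      rw [← pow_add]
      have : n - k + k = n := by omega
      rw [this]; ring
    rw [h2, Int.add_mul_emod_self_right]
  rw [h]

lemma b_period (j : ℤ) (k n : ℕ) (hk : 1 ≤ k) (hkn : k ≤ n) :
    b (j + 2 ^ n) k = b j k := by
  rw [b_eq _ k hk, b_eq j k hk]
  have h : (j + 2 ^ n) % 2 ^ k = j % 2 ^ k := by
    have h2 : (j + 2 ^ n) = j + 2 ^ (n - k) * 2 ^ k := by
      rw [← pow_add]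
      have : n - k + k = n := by omega
      rw [this]
    rw [h2, Int.add_mul_emod_self_right]
  rw [h]

lemma G_period (i : ℤ) (q k n : ℕ) (hk : 1 ≤ k) (hkn : k ≤ n) :
    G (i + 2 ^ n) q k = G i q k := by
  unfold G
  rw [f_period i k n hk hkn]
  have h : i + 2 ^ n - 1 = (i - 1) + 2 ^ n := by ring
  rw [h, b_period (i - 1) k n hk hkn]

lemma W_period (i : ℤ) (q n : ℕ) : W (i + 2 ^ n) q n = W i q n := by
  unfold W
  refine Finset.sum_congr rfl fun k hk => ?_
  rw [Finset.mem_Icc] at hk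
  exact G_period i q k n hk.1 hk.2

def qw (n : ℕ) : ℕ := if n % 2 = 0 then 1 else 2

lemma exist_eq (n : ℕ) (hn : 2 ≤ n) : W (p n + 2) (qw n) n = m n + 1 := by
  induction n using Nat.strong_induction_on with
  | _ n ih =>
    match n, hn with
    | 2, _ => decide
    | 3, _ => decide
    | (n + 4), _ =>
      have hIH := ih (n + 2) (by omega) (by omega)
      have hq2 : qw (n + 4) = qw (n + 2) := by
        unfold qw
        have h : (n + 4) % 2 = (n + 2) % 2 := by omega
        rw [h]
      set q := qw (n + 2) with hqdef
      have hql : q ≤ 2 := by rw [hqdef]; unfold qw; split_ifs <;> omega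
      have hp := p_step (n + 2)
      have hm := m_step (n + 2)
      have e1 : n + 2 + 2 = n + 4 := by omega
      have e2 : n + 2 + 1 = n + 3 := by omega
      rw [e1] at hp hm
      rw [e2] at hm
      -- abbreviations
      set i' : ℤ := (p (n + 2) + 2) + 2 ^ (n + 2) with hi'
      have hi'' : p (n + 4) + 2 = i' := by rw [hi', hp]; ring
      have hws := W_step i' q (n + 2)
      rw [e1, e2] at hws
      have hWp : W i' q (n + 2) = W (p (n + 2) + 2) q (n + 2) := by
        rw [hi']; exact W_period (p (n + 2) + 2) q (n + 2)
      -- numeric facts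
      set t : ℤ := 2 ^ (n + 2) with ht
      have ht4 : (4:ℤ) ≤ t := by
        rw [ht]
        calc (4:ℤ) = 2 ^ 2 := by norm_num
        _ ≤ 2 ^ (n + 2) := pow_le_pow_right₀ (by norm_num) (by omega)
      have h23 : (2:ℤ) ^ (n + 3) = 2 * t := by rw [ht, pow_succ]; ring
      have h24 : (2:ℤ) ^ (n + 4) = 4 * t := by rw [ht]; ring
      set j0 : ℤ := i' - 1 with hj0
      have hesign : (-1:ℤ) ^ (n + 4) = 1 ∨ (-1:ℤ) ^ (n + 4) = -1 := by
        rcases Nat.even_or_odd (n + 4) with h | h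
        · exact Or.inl h.neg_one_pow
        · exact Or.inr h.neg_one_pow
      have hpm := p_mul (n + 4)
      have hj0eq : j0 = p (n + 4) + 1 := by rw [hj0, ← hi'']; ring
      have hjlow : t < j0 := by rw [hj0eq]; omega
      have hjhigh : j0 < 2 * t := by rw [hj0eq]; omega
      have hj0nn : 0 ≤ j0 := by omega
      -- residues
      have hr3 : j0 % 2 ^ (n + 3) = j0 := Int.emod_eq_of_lt hj0nn (by omega)
      have hr4 : j0 % 2 ^ (n + 4) = j0 := Int.emod_eq_of_lt hj0nn (by omega)
      -- the two top terms
      have hG3 : G i' q (n + 3) = 2 * t - j0 := by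
        unfold G
        rw [if_neg (by omega), f_eq i' (n + 3) (by omega), b_eq (i' - 1) (n + 3) (by omega)]
        have he : n + 3 - 1 = n + 2 := by omega
        rw [he, ← hj0, hr3, ← ht]
        rw [if_neg (by omega), if_neg (by omega), h23]
        ring
      have hG4 : G i' q (n + 4) = j0 := by
        unfold G
        rw [if_neg (by omega), f_eq i' (n + 4) (by omega), b_eq (i' - 1) (n + 4) (by omega)]
        have he : n + 4 - 1 = n + 3 := by omega
        rw [he, ← hj0, hr4, h23]
        rw [if_pos (by omega), if_pos (by omega)]
        ring
      rw [hq2, hi'', hws, hWp, hIH, hG3, hG4, hm, h23]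
      ring

theorem max_T_eq_m_add_one (n : ℕ) (hn : 2 ≤ n) :
    (∀ i : ℤ, ∀ q : ℕ, 0 < i → i < 2 ^ n → 1 ≤ q → q ≤ n →
        S i n + e (i - 1) q n ≤ m n + 1) ∧
    (∃ i : ℤ, ∃ q : ℕ, 0 < i ∧ i < 2 ^ n ∧ 1 ≤ q ∧ q ≤ n ∧
        S i n + e (i - 1) q n = m n + 1) := by
  constructor
  · intro i q hi hiN hq1 hqn
    rw [sum_eq]
    exact (ub n i q).1
  · have hpm := p_mul n
    have hsign : (-1:ℤ) ^ n = 1 ∨ (-1:ℤ) ^ n = -1 := by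
      rcases Nat.even_or_odd n with h | h
      · exact Or.inl h.neg_one_pow
      · exact Or.inr h.neg_one_pow
    have ht4 : (4:ℤ) ≤ 2 ^ n := by
      calc (4:ℤ) = 2 ^ 2 := by norm_num
      _ ≤ 2 ^ n := pow_le_pow_right₀ (by norm_num) hn
    refine ⟨p n + 2, qw n, by omega, by omega, ?_, ?_, ?_⟩
    · unfold qw; split_ifs <;> omega
    · unfold qw; split_ifs <;> omega
    · rw [sum_eq]
      exact exist_eq n hn
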